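/- arXiv:2503.11850 — 5 statements merged into one kernel-verified Lean document; each statement's English description precedes it below -/
import Mathlib

section
/- For T ≥ 2 and p ∈ (0, 1/2), the total variation distance between Bin(T,p) and Bin(T-1,p) + Bern(1-p) is at most (1-2p)/√(4p(1-p)T). -/
/-- Probability mass function of the binomial distribution `Bin(T, p)` at `k`. -/
noncomputable def binomPMF (T : ℕ) (p : ℝ) (k : ℕ) : ℝ :=
  (T.choose k : ℝ) * p ^ k * (1 - p) ^ (T - k)

/-- PMF of the independent sum `Bin(T-1, p) + Bern(q)` at `k`. -/
noncomputable def binBernConvPMF (T : ℕ) (p q : ℝ) (k : ℕ) : ℝ :=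
  (1 - q) * binomPMF (T - 1) p k +
    q * (if k = 0 then 0 else binomPMF (T - 1) p (k - 1))

/-- Total variation distance between two probability distributions on ℕ. -/
noncomputable def tvDist (f g : ℕ → ℝ) : ℝ := (1 / 2) * ∑' k, |f k - g k|

/-!
With `b = binomPMF T p`, `b' = binomPMF (T - 1) p` and `q = 1 - p`, one has
`T q b'(k) = (T - k) b(k)` and `T p b'(k - 1) = k b(k)`, hence
`T p q (b(k) - (b' ∗ Bern(q))(k)) = (1 - 2p)(T p - k) b(k)`.
So the total variation distance is `|1 - 2p| / (2 T p q)` times the mean absolute deviation of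
`Bin(T, p)`, which by Cauchy–Schwarz is at most its standard deviation `√(T p q)`.
-/

open Finset Polynomial

lemma sum_abs_mul_le_sqrt_sum_sq_mul {ι : Type*} (s : Finset ι) (a w : ι → ℝ)
    (hw : ∀ i ∈ s, 0 ≤ w i) (hw1 : ∑ i ∈ s, w i = 1) :
    ∑ i ∈ s, |a i| * w i ≤ √(∑ i ∈ s, a i ^ 2 * w i) := by
  apply Real.le_sqrt_of_sq_le
  calc (∑ i ∈ s, |a i| * w i) ^ 2 ≤ (∑ i ∈ s, a i ^ 2 * w i) * ∑ i ∈ s, w i :=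
        sum_sq_le_sum_mul_sum_of_sq_le_mul s (fun i hi => mul_nonneg (sq_nonneg _) (hw i hi)) hw
          (fun i _ => le_of_eq (by rw [mul_pow, sq_abs]; ring))
    _ = ∑ i ∈ s, a i ^ 2 * w i := by rw [hw1, mul_one]

section binomPMF

variable (T : ℕ) (p : ℝ)

lemma binomPMF_eq_eval_bernsteinPolynomial (k : ℕ) :
    binomPMF T p k = (bernsteinPolynomial ℝ T k).eval p := by
  simp [binomPMF, bernsteinPolynomial]

lemma binomPMF_nonneg (hp0 : 0 ≤ p) (hp1 : p ≤ 1) (k : ℕ) : 0 ≤ binomPMF T p k := by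
  unfold binomPMF
  have : 0 ≤ 1 - p := by linarith
  positivity

lemma binomPMF_eq_zero_of_lt {k : ℕ} (hk : T < k) : binomPMF T p k = 0 := by
  simp [binomPMF, Nat.choose_eq_zero_of_lt hk]

lemma sum_binomPMF : ∑ k ∈ range (T + 1), binomPMF T p k = 1 := by
  simpa [binomPMF_eq_eval_bernsteinPolynomial, Polynomial.eval_finsetSum] using
    congrArg (Polynomial.eval p) (bernsteinPolynomial.sum ℝ T)

lemma sum_sq_sub_mul_binomPMF :
    ∑ k ∈ range (T + 1), ((k : ℝ) - T * p) ^ 2 * binomPMF T p k = T * p * (1 - p) := by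
  have h := congrArg (Polynomial.eval p) (bernsteinPolynomial.variance (R := ℝ) T)
  simp only [eval_finsetSum, eval_mul, eval_pow, eval_sub, eval_X, eval_natCast,
    nsmul_eq_mul, eval_one, ← binomPMF_eq_eval_bernsteinPolynomial] at h
  rw [← h]
  refine sum_congr rfl fun k _ => ?_
  ring

lemma add_one_mul_one_sub_mul_binomPMF (k : ℕ) :
    ((T : ℝ) + 1) * (1 - p) * binomPMF T p k = ((T : ℝ) + 1 - k) * binomPMF (T + 1) p k := by
  rcases le_or_gt k T with hk | hk
  · have h := congrArg (Nat.cast : ℕ → ℝ) (Nat.choose_mul_succ_eq T k)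
    push_cast [Nat.cast_sub (Nat.le_succ_of_le hk)] at h
    simp only [binomPMF, Nat.succ_sub hk, pow_succ]
    linear_combination p ^ k * (1 - p) ^ (T - k) * (1 - p) * h
  · obtain rfl | hk' := eq_or_lt_of_le (Nat.succ_le_of_lt hk)
    · simp [binomPMF_eq_zero_of_lt T p hk]
    · simp [binomPMF_eq_zero_of_lt T p hk, binomPMF_eq_zero_of_lt (T + 1) p hk']

lemma add_one_mul_mul_binomPMF (k : ℕ) :
    ((T : ℝ) + 1) * p * binomPMF T p k = ((k : ℝ) + 1) * binomPMF (T + 1) p (k + 1) := by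
  have h := congrArg (Nat.cast : ℕ → ℝ) (Nat.add_one_mul_choose_eq T k)
  push_cast at h
  simp only [binomPMF, Nat.add_sub_add_right, pow_succ]
  linear_combination p ^ k * (1 - p) ^ (T - k) * p * h

end binomPMF

lemma mul_binomPMF_sub_binBernConvPMF (T : ℕ) (p : ℝ) (k : ℕ) :
    T * p * (1 - p) * (binomPMF T p k - binBernConvPMF T p (1 - p) k) =
      (1 - 2 * p) * (T * p - k) * binomPMF T p k := by
  cases T with
  | zero => cases k <;> simp [binomPMF]
  | succ n =>
    simp only [binBernConvPMF, Nat.add_sub_cancel, sub_sub_cancel]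
    push_cast
    cases k with
    | zero =>
      have hA := add_one_mul_one_sub_mul_binomPMF n p 0
      push_cast at hA ⊢
      linear_combination (-p ^ 2) * hA
    | succ j =>
      have hA := add_one_mul_one_sub_mul_binomPMF n p (j + 1)
      have hB := add_one_mul_mul_binomPMF n p j
      simp only [if_neg (Nat.succ_ne_zero j), Nat.add_sub_cancel]
      push_cast at hA hB ⊢
      linear_combination (-p ^ 2) * hA - (1 - p) ^ 2 * hB

lemma sum_abs_sub_mul_binomPMF_le (T : ℕ) (p : ℝ) (hp0 : 0 ≤ p) (hp1 : p ≤ 1) :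
    ∑ k ∈ range (T + 1), |(k : ℝ) - T * p| * binomPMF T p k ≤ √(T * p * (1 - p)) := by
  rw [← sum_sq_sub_mul_binomPMF]
  exact sum_abs_mul_le_sqrt_sum_sq_mul _ _ _ (fun k _ => binomPMF_nonneg T p hp0 hp1 k)
    (sum_binomPMF T p)

lemma tvDist_binomPMF_binBernConvPMF (T : ℕ) (hT : 0 < T) (p : ℝ) (hp0 : 0 < p) (hp1 : p < 1) :
    tvDist (binomPMF T p) (binBernConvPMF T p (1 - p)) =
      |1 - 2 * p| / (2 * (T * p * (1 - p))) *
        ∑ k ∈ range (T + 1), |(k : ℝ) - T * p| * binomPMF T p k := by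
  have hvar : 0 < (T : ℝ) * p * (1 - p) := by
    have : (0 : ℝ) < T := Nat.cast_pos.mpr hT
    have : 0 < 1 - p := by linarith
    positivity
  have habs (k : ℕ) : |binomPMF T p k - binBernConvPMF T p (1 - p) k| =
      |1 - 2 * p| / (T * p * (1 - p)) * (|(k : ℝ) - T * p| * binomPMF T p k) := by
    have hdiff : binomPMF T p k - binBernConvPMF T p (1 - p) k =
        (1 - 2 * p) / (T * p * (1 - p)) * ((T * p - k) * binomPMF T p k) := by
      rw [div_mul_eq_mul_div, eq_div_iff hvar.ne']
      linear_combination mul_binomPMF_sub_binBernConvPMF T p k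
    rw [hdiff, abs_mul, abs_mul, abs_div, abs_of_pos hvar, abs_sub_comm (T * p : ℝ),
      abs_of_nonneg (binomPMF_nonneg T p hp0.le hp1.le k)]
  have hsupp (k : ℕ) (hk : k ∉ range (T + 1)) :
      |(k : ℝ) - T * p| * binomPMF T p k = 0 := by
    rw [binomPMF_eq_zero_of_lt T p (by simpa using hk), mul_zero]
  unfold tvDist
  simp_rw [habs]
  rw [tsum_mul_left, tsum_eq_sum hsupp]
  field_simp

/-- For `T ≥ 2`, `p ∈ (0, 1/2)`,
`TV(Bin(T,p), Bin(T-1,p) + Bern(1-p)) ≤ (1-2p)/√(4p(1-p)T)`. -/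
theorem stmt1 (T : ℕ) (hT : 2 ≤ T) (p : ℝ) (hp0 : 0 < p) (hp2 : p < 1 / 2) :
    tvDist (binomPMF T p) (binBernConvPMF T p (1 - p)) ≤
      (1 - 2 * p) / Real.sqrt (4 * p * (1 - p) * T) := by
  have hvar : 0 < (T : ℝ) * p * (1 - p) := by
    have : (0 : ℝ) < T := by positivity
    have : 0 < 1 - p := by linarith
    positivity
  have hsqrt : √(4 * p * (1 - p) * T) = 2 * √(T * p * (1 - p)) := by
    rw [show 4 * p * (1 - p) * T = 2 ^ 2 * (T * p * (1 - p)) by ring, Real.sqrt_mul (by norm_num),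
      Real.sqrt_sq (by norm_num)]
  rw [tvDist_binomPMF_binBernConvPMF T (by omega) p hp0 (by linarith),
    abs_of_nonneg (by linarith : 0 ≤ 1 - 2 * p), hsqrt]
  calc (1 - 2 * p) / (2 * (T * p * (1 - p))) *
        ∑ k ∈ range (T + 1), |(k : ℝ) - T * p| * binomPMF T p k
      ≤ (1 - 2 * p) / (2 * (T * p * (1 - p))) * √(T * p * (1 - p)) :=
        mul_le_mul_of_nonneg_left (sum_abs_sub_mul_binomPMF_le T p hp0.le (by linarith))
          (div_nonneg (by linarith) (by positivity))
    _ = (1 - 2 * p) / (2 * √(T * p * (1 - p))) := by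
        rw [div_mul_eq_mul_div, div_eq_div_iff (by positivity) (by positivity)]
        linear_combination 2 * (1 - 2 * p) * Real.sq_sqrt hvar.le
end

section
/- 2·TV(Bin(T-1,p), Bin(T-1,p)+1) = (1/(Tp(1-p))) · E_{X~Bin(T,p)}[|X - Tp|]. -/
/-- PMF of the shifted binomial `Bin(T-1, p) + 1` at `k`. -/
noncomputable def binShiftPMF (T : ℕ) (p : ℝ) (k : ℕ) : ℝ :=
  if k = 0 then 0 else binomPMF (T - 1) p (k - 1)

/-- Mean absolute deviation of `X ~ Bin(T, p)` from its mean `Tp`. -/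
noncomputable def binomMAD (T : ℕ) (p : ℝ) : ℝ :=
  ∑ k ∈ Finset.range (T + 1), binomPMF T p k * |(k : ℝ) - (T : ℝ) * p|

lemma keylem (T j : ℕ) (hT : 1 ≤ T) (hj : j ≤ T) (p : ℝ) :
    ((T:ℝ)*p*(1-p)) * (binomPMF (T-1) p j - binShiftPMF T p j)
      = binomPMF T p j * ((T:ℝ)*p - j) := by
  obtain ⟨s, rfl⟩ : ∃ s, T = s + 1 := ⟨T-1, by omega⟩
  rcases j with _ | i
  · simp [binomPMF, binShiftPMF, pow_succ]
    ring
  · have hi : i ≤ s := by omega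
    obtain ⟨m, rfl⟩ : ∃ m, s = i + m := ⟨s - i, by omega⟩
    rcases m with _ | m'
    · simp [binomPMF, binShiftPMF, Nat.choose_self, Nat.choose_succ_self]
      push_cast
      ring
    · have hA : (i+m'+2) * Nat.choose (i+m'+1) (i+1) = (m'+1) * Nat.choose (i+m'+2) (i+1) := by
        calc (i+m'+2) * Nat.choose (i+m'+1) (i+1)
            = Nat.choose (i+m'+2) (i+2) * (i+2) := Nat.add_one_mul_choose_eq (i+m'+1) (i+1)
          _ = Nat.choose (i+m'+2) (i+1) * ((i+m'+2) - (i+1)) := Nat.choose_succ_right_eq _ _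
          _ = (m'+1) * Nat.choose (i+m'+2) (i+1) := by
              rw [Nat.mul_comm]; congr 1; omega
      have hB : (i+m'+2) * Nat.choose (i+m'+1) i = (i+1) * Nat.choose (i+m'+2) (i+1) := by
        rw [Nat.mul_comm (i+1)]
        exact Nat.add_one_mul_choose_eq (i+m'+1) i
      have hA' : ((i:ℝ)+m'+2) * (Nat.choose (i+m'+1) (i+1) : ℝ)
          = ((m':ℝ)+1) * (Nat.choose (i+m'+2) (i+1) : ℝ) := by exact_mod_cast hA
      have hB' : ((i:ℝ)+m'+2) * (Nat.choose (i+m'+1) i : ℝ)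
          = ((i:ℝ)+1) * (Nat.choose (i+m'+2) (i+1) : ℝ) := by exact_mod_cast hB
      simp only [binomPMF, binShiftPMF, if_neg (Nat.succ_ne_zero i)]
      rw [show i + (m'+1) + 1 - 1 = i + m' + 1 from by omega,
        show i + 1 - 1 = i from by omega,
        show i + m' + 1 - (i+1) = m' from by omega,
        show i + m' + 1 - i = m' + 1 from by omega,
        show i + (m'+1) + 1 - (i+1) = m' + 1 from by omega,
        show i + (m'+1) + 1 = i + m' + 2 from by omega]
      push_cast
      linear_combination (p^(i+2)*(1-p)^(m'+1)) * hA' - (p^(i+1)*(1-p)^(m'+2)) * hB'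

/-- `2·TV(Bin(T-1,p), Bin(T-1,p)+1) = (1/(Tp(1-p)))·E_{X~Bin(T,p)}[|X - Tp|]`. -/
theorem stmt6 (T : ℕ) (hT : 2 ≤ T) (p : ℝ) (hp0 : 0 < p) (hp1 : p < 1) :
    2 * tvDist (binomPMF (T - 1) p) (binShiftPMF T p) =
      (1 / ((T : ℝ) * p * (1 - p))) * binomMAD T p := by
  have hT1 : 1 ≤ T := by omega
  have hTpos : (0:ℝ) < T := by exact_mod_cast (by omega : 0 < T)
  have hD : (0:ℝ) < (T:ℝ)*p*(1-p) := mul_pos (mul_pos hTpos hp0) (by linarith)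
  have hzero : ∀ k ∉ Finset.range (T+1), |binomPMF (T-1) p k - binShiftPMF T p k| = 0 := by
    intro k hk
    simp only [Finset.mem_range, not_lt] at hk
    have h1 : binomPMF (T-1) p k = 0 := by
      simp [binomPMF, Nat.choose_eq_zero_of_lt (by omega : T-1 < k)]
    have h2 : binShiftPMF T p k = 0 := by
      simp [binShiftPMF, binomPMF, Nat.choose_eq_zero_of_lt (by omega : T-1 < k-1),
        (by omega : k ≠ 0)]
    simp [h1, h2]
  have hsum : ∑' k, |binomPMF (T-1) p k - binShiftPMF T p k|
      = ∑ k ∈ Finset.range (T+1), |binomPMF (T-1) p k - binShiftPMF T p k| :=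
    tsum_eq_sum hzero
  have hterm : ∀ k ∈ Finset.range (T+1), |binomPMF (T-1) p k - binShiftPMF T p k|
      = (1/((T:ℝ)*p*(1-p))) * (binomPMF T p k * |(k:ℝ) - (T:ℝ)*p|) := by
    intro k hk
    simp only [Finset.mem_range] at hk
    have hkey := keylem T k hT1 (by omega) p
    have h1p : (0:ℝ) ≤ 1 - p := by linarith
    have hnn : 0 ≤ binomPMF T p k := by
      unfold binomPMF; positivity
    have heq : binomPMF (T-1) p k - binShiftPMF T p k
        = binomPMF T p k * ((T:ℝ)*p - k) / ((T:ℝ)*p*(1-p)) := by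
      rw [eq_div_iff hD.ne']
      linarith [hkey]
    rw [heq, abs_div, abs_of_pos hD, abs_mul, abs_of_nonneg hnn, abs_sub_comm]
    ring
  rw [tvDist, hsum, Finset.sum_congr rfl hterm, binomMAD, ← Finset.mul_sum]
  ring
end

section
/- (Kairouz–Oh–Viswanath extremality for binary inputs) For any ε-DP local randomizer R : {0,1} → S with finite output set S, there exists a randomized post-processing function h : {0,1} → S such that R(0) has the same distribution as h(RR_ε(0)) and R(1) has the same distribution as h(RR_ε(1)). -/
/-!
For `ε ≠ 0` the channel matrix of `RR_ε` is invertible, so `h` is forced: it is the inverse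
matrix applied to `R`, namely `h y = (e^ε R y - R (¬y)) / (e^ε - 1)`. Since that matrix is
stochastic, the rows of `h` sum to `1`, and `h` is nonnegative exactly because
`R (¬y) ≤ e^ε R y`, which is the `ε`-DP condition.
-/

open Real

/-- The `ε`-randomized response mechanism on a bit: `rrPMF ε b y` is the probability
that `RR_ε(b)` outputs `y`; it outputs `b` with probability `e^ε/(1+e^ε)` and `1-b`
with probability `1/(1+e^ε)`. -/
noncomputable def rrPMF (ε : ℝ) (b y : Bool) : ℝ :=
  if y = b then exp ε / (1 + exp ε) else 1 / (1 + exp ε)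

noncomputable def rrPostProcessing {S : Type*} (ε : ℝ) (R : Bool → S → ℝ) (y : Bool) (s : S) :
    ℝ :=
  (exp ε * R y s - R (!y) s) / (exp ε - 1)

section

variable {S : Type*} {ε : ℝ} (R : Bool → S → ℝ)

lemma rrPostProcessing_nonneg (hε : 0 ≤ ε) {y : Bool} {s : S}
    (hDP : R (!y) s ≤ exp ε * R y s) : 0 ≤ rrPostProcessing ε R y s :=
  div_nonneg (sub_nonneg.mpr hDP) (sub_nonneg.mpr (one_le_exp hε))

lemma sum_rrPostProcessing [Fintype S] (hε : ε ≠ 0) (hR : ∀ b, ∑ s, R b s = 1) (y : Bool) :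
    ∑ s, rrPostProcessing ε R y s = 1 := by
  have hd : exp ε - 1 ≠ 0 := sub_ne_zero.mpr ((exp_eq_one_iff ε).not.mpr hε)
  simp only [rrPostProcessing, ← Finset.sum_div, Finset.sum_sub_distrib, ← Finset.mul_sum, hR]
  rw [mul_one, div_self hd]

lemma sum_rrPMF_mul_rrPostProcessing (hε : ε ≠ 0) (b : Bool) (s : S) :
    ∑ y, rrPMF ε b y * rrPostProcessing ε R y s = R b s := by
  have hd : exp ε - 1 ≠ 0 := sub_ne_zero.mpr ((exp_eq_one_iff ε).not.mpr hε)
  cases b <;> simp [rrPMF, rrPostProcessing] <;> field_simp <;> ring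

end

theorem stmt10_general {S : Type} [Fintype S] (ε : ℝ) (hε : 0 < ε)
    (R : Bool → S → ℝ)
    (hR1 : ∀ b, ∑ s, R b s = 1)
    (hDP : ∀ b b' s, R b s ≤ exp ε * R b' s) :
    ∃ h : Bool → S → ℝ, (∀ y s, 0 ≤ h y s) ∧ (∀ y, ∑ s, h y s = 1) ∧
      ∀ b s, R b s = ∑ y, rrPMF ε b y * h y s :=
  ⟨rrPostProcessing ε R, fun _ _ => rrPostProcessing_nonneg R hε.le (hDP _ _ _),
    sum_rrPostProcessing R hε.ne' hR1, fun b s => (sum_rrPMF_mul_rrPostProcessing R hε.ne' b s).symm⟩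

/-- Extremality of randomized response for binary inputs: any `ε`-DP local
randomizer `R : {0,1} → S` is a randomized post-processing of `RR_ε`. -/
theorem stmt10 {S : Type} [Fintype S] (ε : ℝ) (hε : 0 < ε)
    (R : Bool → S → ℝ)
    (hR0 : ∀ b s, 0 ≤ R b s) (hR1 : ∀ b, ∑ s, R b s = 1)
    (hDP : ∀ b b' s, R b s ≤ exp ε * R b' s) :
    ∃ h : Bool → S → ℝ, (∀ y s, 0 ≤ h y s) ∧ (∀ y, ∑ s, h y s = 1) ∧
      ∀ b s, R b s = ∑ y, rrPMF ε b y * h y s :=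
  stmt10_general ε hε R hR1 hDP
end

section
/- If each per-step update State_t(·; s) of a streaming algorithm is an ε-DP local randomizer in its input bit for every state s, then there is a randomized post-processing function g : {0,1}^T → S^T such that for every input stream (x_1,...,x_T) and initial state s_0, the state trajectory (s_1,...,s_T) has the same distribution as g(RR_ε(x_1), ..., RR_ε(x_T)), where the T randomized responses are independent. -/
open Real

/-- Probability that a streaming algorithm with per-step (randomized) state-update
kernels `St t x s s' = Pr[State_t(x; s) = s']`, run from initial state `s0` on the
input stream `x`, produces the state trajectory `σ = (s_1, …, s_T)`. -/
noncomputable def trajProb {S : Type} (T : ℕ) (St : ℕ → Bool → S → S → ℝ)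
    (s0 : S) (x : Fin T → Bool) (σ : Fin T → S) : ℝ :=
  ∏ t : Fin T,
    St t (x t)
      (if (t : ℕ) = 0 then s0
       else σ ⟨(t : ℕ) - 1, lt_of_le_of_lt (Nat.sub_le _ _) t.isLt⟩)
      (σ t)

/-!
For an `ε`-DP kernel `K` on one input bit, the two rows of randomized response are invertible:
`H y := (e^ε K y - K (¬y)) / (e^ε - 1)` satisfies `K x = ∑ y, RR_ε(x, y) H y`, and `H y` is a
probability distribution exactly because `K (¬y) ≤ e^ε K y`. Running the algorithm with the kernels
`H` in place of the updates, driven by the released bits, is the post-processing `g`: the trajectory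
probability is a product over time steps, and the product of the per-step sums over `y` expands
into a sum over the whole response vector `b`.
-/

section RandomizedResponse

variable {α : Type*} {ε : ℝ}

noncomputable def rrInverse (ε : ℝ) (K : Bool → α → ℝ) (y : Bool) (a : α) : ℝ :=
  (exp ε * K y a - K (!y) a) / (exp ε - 1)

lemma rrInverse_nonneg (hε : 0 < ε) {K : Bool → α → ℝ}
    (hDP : ∀ x x' a, K x a ≤ exp ε * K x' a) (y : Bool) (a : α) :
    0 ≤ rrInverse ε K y a :=
  div_nonneg (sub_nonneg.mpr (hDP (!y) y a)) (sub_pos.mpr (one_lt_exp_iff.mpr hε)).le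

lemma sum_rrInverse [Fintype α] (hε : ε ≠ 0) {K : Bool → α → ℝ}
    (hK : ∀ x, ∑ a, K x a = 1) (y : Bool) :
    ∑ a, rrInverse ε K y a = 1 := by
  have hne : exp ε - 1 ≠ 0 := sub_ne_zero.mpr ((exp_eq_one_iff ε).not.mpr hε)
  simp only [rrInverse]
  rw [← Finset.sum_div, Finset.sum_sub_distrib, ← Finset.mul_sum, hK, hK, mul_one, div_self hne]

lemma sum_rrPMF_mul_rrInverse (hε : ε ≠ 0) (K : Bool → α → ℝ) (x : Bool) (a : α) :
    ∑ y, rrPMF ε x y * rrInverse ε K y a = K x a := by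
  have hne : exp ε - 1 ≠ 0 := sub_ne_zero.mpr ((exp_eq_one_iff ε).not.mpr hε)
  have hne' : 1 + exp ε ≠ 0 := by positivity
  rw [Fintype.sum_bool]
  cases x <;>
    simp only [rrPMF, rrInverse, Bool.not_true, Bool.not_false, if_true, if_false, reduceCtorEq] <;>
    field_simp <;> ring

end RandomizedResponse

lemma Fin.snoc_mk_of_lt {α : Type*} {n : ℕ} (σ : Fin n → α) (a : α) {i : ℕ} (hi : i < n) :
    Fin.snoc (α := fun _ => α) σ a ⟨i, hi.trans (Nat.lt_succ_self n)⟩ = σ ⟨i, hi⟩ :=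
  Fin.snoc_castSucc (α := fun _ => α) a σ ⟨i, hi⟩

section Trajectory

variable {S : Type}

def lastState (s0 : S) : {n : ℕ} → (Fin n → S) → S
  | 0, _ => s0
  | n + 1, σ => σ (Fin.last n)

lemma trajProb_snoc (n : ℕ) (K : ℕ → Bool → S → S → ℝ) (s0 : S) (b : Fin (n + 1) → Bool)
    (σ : Fin n → S) (s : S) :
    trajProb (n + 1) K s0 b (Fin.snoc σ s) =
      trajProb n K s0 (Fin.init b) σ * K n (b (Fin.last n)) (lastState s0 σ) s := by
  unfold trajProb
  rw [Fin.prod_univ_castSucc]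
  congr 1
  · refine Finset.prod_congr rfl fun t _ => ?_
    simp only [Fin.val_castSucc, Fin.snoc_castSucc, Fin.init]
    split_ifs with ht
    · rfl
    · rw [Fin.snoc_mk_of_lt σ s (by omega)]
  · simp only [Fin.val_last, Fin.snoc_last]
    congr 1
    cases n with
    | zero => rfl
    | succ m => exact Fin.snoc_mk_of_lt σ s (Nat.lt_succ_self m)

lemma sum_trajProb [Fintype S] (T : ℕ) (K : ℕ → Bool → S → S → ℝ) (s0 : S)
    (hK : ∀ t y s, ∑ s', K t y s s' = 1) (b : Fin T → Bool) :
    ∑ σ : Fin T → S, trajProb T K s0 b σ = 1 := by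
  induction T with
  | zero => simp [trajProb]
  | succ n ih =>
    rw [← (Fin.snocEquiv fun _ => S).sum_comp, Fintype.sum_prod_type_right]
    dsimp only [Fin.snocEquiv, Equiv.coe_fn_mk]
    simp only [trajProb_snoc, ← Finset.mul_sum, hK, mul_one]
    exact ih (Fin.init b)

lemma trajProb_nonneg (T : ℕ) {K : ℕ → Bool → S → S → ℝ} (hK : ∀ t y s s', 0 ≤ K t y s s')
    (s0 : S) (b : Fin T → Bool) (σ : Fin T → S) :
    0 ≤ trajProb T K s0 b σ :=
  Finset.prod_nonneg fun _ _ => hK _ _ _ _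

lemma trajProb_eq_sum_prod_mul (T : ℕ) (P : Bool → Bool → ℝ) (K L : ℕ → Bool → S → S → ℝ)
    (hKL : ∀ t x s s', K t x s s' = ∑ y, P x y * L t y s s')
    (s0 : S) (x : Fin T → Bool) (σ : Fin T → S) :
    trajProb T K s0 x σ =
      ∑ b : Fin T → Bool, (∏ t, P (x t) (b t)) * trajProb T L s0 b σ := by
  simp only [trajProb, hKL, Finset.prod_univ_sum, ← Finset.prod_mul_distrib]
  rfl

end Trajectory

theorem stmt12_general {S : Type} [Fintype S] (T : ℕ) (ε : ℝ) (hε : 0 < ε)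
    (St : ℕ → Bool → S → S → ℝ) (s0 : S)
    (hSt1 : ∀ t x s, ∑ s', St t x s s' = 1)
    (hDP : ∀ (t : ℕ) (s : S) (x x' : Bool) (s' : S),
      St t x s s' ≤ exp ε * St t x' s s') :
    ∃ g : (Fin T → Bool) → (Fin T → S) → ℝ,
      (∀ b σ, 0 ≤ g b σ) ∧ (∀ b, ∑ σ : Fin T → S, g b σ = 1) ∧
        ∀ (x : Fin T → Bool) (σ : Fin T → S),
          trajProb T St s0 x σ =
            ∑ b : Fin T → Bool, (∏ t : Fin T, rrPMF ε (x t) (b t)) * g b σ := by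
  let H : ℕ → Bool → S → S → ℝ := fun t y s => rrInverse ε (fun x => St t x s) y
  refine ⟨trajProb T H s0, fun b σ => ?_, fun b => ?_, fun x σ => ?_⟩
  · exact trajProb_nonneg T (fun t y s => rrInverse_nonneg hε (hDP t s) y) s0 b σ
  · exact sum_trajProb T H s0 (fun t y s => sum_rrInverse hε.ne' (hSt1 t · s) y) b
  · refine trajProb_eq_sum_prod_mul T (rrPMF ε) St H (fun t x s s' => ?_) s0 x σ
    exact (sum_rrPMF_mul_rrInverse hε.ne' (fun x => St t x s) x s').symm

/-- If every per-step update of a streaming algorithm is an `ε`-DP local randomizer in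
its input bit, then the full state trajectory is a randomized post-processing `g` of
`T` independent randomized responses `(RR_ε(x_1), …, RR_ε(x_T))`. -/
theorem stmt12 {S : Type} [Fintype S] (T : ℕ) (ε : ℝ) (hε : 0 < ε)
    (St : ℕ → Bool → S → S → ℝ) (s0 : S)
    (hSt0 : ∀ t x s s', 0 ≤ St t x s s')
    (hSt1 : ∀ t x s, ∑ s', St t x s s' = 1)
    (hDP : ∀ (t : ℕ) (s : S) (x x' : Bool) (s' : S),
      St t x s s' ≤ exp ε * St t x' s s') :
    ∃ g : (Fin T → Bool) → (Fin T → S) → ℝ,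
      (∀ b σ, 0 ≤ g b σ) ∧ (∀ b, ∑ σ : Fin T → S, g b σ = 1) ∧
        ∀ (x : Fin T → Bool) (σ : Fin T → S),
          trajProb T St s0 x σ =
            ∑ b : Fin T → Bool, (∏ t : Fin T, rrPMF ε (x t) (b t)) * g b σ :=
  stmt12_general T ε hε St s0 hSt1 hDP
end

section
/- Suppose a binary channel maps input bit b to an output whose distributions under b=0 and b=1 have total variation distance at most δ. Then any estimator, from n independent outputs of the channel applied to bits b_1,...,b_n, of the sum S = Σ b_i must have worst-case expected error Ω(min(n, 1/δ) ) up to constants; in particular, if δ = c/√T then the expected error is Ω(√T/c) whenever √T/c ≤ n. -/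
/-!
Le Cam's two-point method. Compare the all-zero input with the input having
`m = min n ⌊1/(2δ)⌋` leading ones. The ℓ¹ distance between product distributions is
subadditive over the coordinates, so the two output laws are at ℓ¹ distance at most
`2mδ ≤ 1` and hence share mass at least `1/2`. On that shared mass every estimate is at
distance at least `m/2` in total from the two true sums `0` and `m`, so one of the two
risks is at least `m/4 ≥ min(n, 1/δ)/16`.
-/

open Finset

section ProductDistribution

variable {O : Type*} [Fintype O]

theorem sum_prod_eq_one {ι : Type*} [Fintype ι] [DecidableEq ι] {p : ι → O → ℝ}
    (hp : ∀ i, ∑ x, p i x = 1) : ∑ o : ι → O, ∏ i, p i (o i) = 1 := by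
  simp [← Fintype.prod_sum, hp]

theorem sum_abs_mul_sub_mul_le {β : Type*} [Fintype β] {p q : O → ℝ} {P Q : β → ℝ}
    (hp : ∀ x, 0 ≤ p x) (hp1 : ∑ x, p x = 1) (hQ : ∀ y, 0 ≤ Q y) (hQ1 : ∑ y, Q y = 1) :
    ∑ x, ∑ y, |p x * P y - q x * Q y| ≤ ∑ x, |p x - q x| + ∑ y, |P y - Q y| := by
  have hpoint : ∀ x y, |p x * P y - q x * Q y| ≤ p x * |P y - Q y| + |p x - q x| * Q y := by
    intro x y
    calc |p x * P y - q x * Q y| = |p x * (P y - Q y) + (p x - q x) * Q y| := by ring_nf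
      _ ≤ |p x * (P y - Q y)| + |(p x - q x) * Q y| := abs_add_le _ _
      _ = p x * |P y - Q y| + |p x - q x| * Q y := by
        rw [abs_mul, abs_mul, abs_of_nonneg (hp x), abs_of_nonneg (hQ y)]
  calc ∑ x, ∑ y, |p x * P y - q x * Q y|
      ≤ ∑ x, ∑ y, (p x * |P y - Q y| + |p x - q x| * Q y) :=
        sum_le_sum fun x _ => sum_le_sum fun y _ => hpoint x y
    _ = (∑ x, p x) * ∑ y, |P y - Q y| + (∑ x, |p x - q x|) * ∑ y, Q y := by
        simp only [sum_add_distrib, ← mul_sum, ← sum_mul]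
    _ = ∑ x, |p x - q x| + ∑ y, |P y - Q y| := by rw [hp1, hQ1]; ring

theorem sum_abs_prod_sub_prod_le : ∀ {n : ℕ} {p q : Fin n → O → ℝ},
    (∀ i x, 0 ≤ p i x) → (∀ i x, 0 ≤ q i x) → (∀ i, ∑ x, p i x = 1) → (∀ i, ∑ x, q i x = 1) →
    ∑ o : Fin n → O, |∏ i, p i (o i) - ∏ i, q i (o i)| ≤ ∑ i, ∑ x, |p i x - q i x|
  | 0, _, _, _, _, _, _ => by simp
  | n + 1, p, q, hp, hq, hp1, hq1 => by
    have hsplit : ∑ o : Fin (n + 1) → O, |∏ i, p i (o i) - ∏ i, q i (o i)| =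
        ∑ x, ∑ g : Fin n → O, |p 0 x * ∏ i, p i.succ (g i) - q 0 x * ∏ i, q i.succ (g i)| := by
      rw [← Fintype.sum_prod_type']
      refine Fintype.sum_equiv (Fin.consEquiv fun _ => O).symm _ _ fun o => ?_
      simp [Fin.prod_univ_succ, Fin.consEquiv, Fin.tail]
    have hfactor := sum_abs_mul_sub_mul_le (q := q 0)
      (P := fun g : Fin n → O => ∏ i, p i.succ (g i))
      (Q := fun g : Fin n → O => ∏ i, q i.succ (g i)) (hp 0) (hp1 0)
      (fun g => prod_nonneg fun i _ => hq _ _) (sum_prod_eq_one fun i : Fin n => hq1 i.succ)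
    have htail := sum_abs_prod_sub_prod_le (fun i => hp i.succ) (fun i => hq i.succ)
      (fun i => hp1 i.succ) (fun i => hq1 i.succ)
    rw [hsplit, Fin.sum_univ_succ]
    linarith

end ProductDistribution

section LeCam

variable {X : Type*} [Fintype X] {P Q : X → ℝ}

theorem sum_min_eq (hP : ∑ x, P x = 1) (hQ : ∑ x, Q x = 1) :
    ∑ x, min (P x) (Q x) = 1 - (∑ x, |P x - Q x|) / 2 := by
  have hmin : ∀ x, min (P x) (Q x) = (P x + Q x - |P x - Q x|) / 2 := fun x => by
    linarith [min_add_max (P x) (Q x), max_sub_min_eq_abs' (P x) (Q x)]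
  simp only [hmin, ← sum_div, sum_sub_distrib, sum_add_distrib, hP, hQ]
  ring

theorem abs_sub_mul_sum_min_le (hP : ∀ x, 0 ≤ P x) (hQ : ∀ x, 0 ≤ Q x) (f : X → ℝ) (a b : ℝ) :
    |a - b| * ∑ x, min (P x) (Q x) ≤ ∑ x, P x * |f x - a| + ∑ x, Q x * |f x - b| := by
  rw [mul_sum, ← sum_add_distrib]
  refine sum_le_sum fun x _ => ?_
  have hm : 0 ≤ min (P x) (Q x) := le_min (hP x) (hQ x)
  calc |a - b| * min (P x) (Q x) ≤ (|f x - a| + |f x - b|) * min (P x) (Q x) := by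
        gcongr
        simpa only [abs_sub_comm a] using abs_sub_le a (f x) b
    _ ≤ P x * |f x - a| + Q x * |f x - b| := by
        rw [add_mul, mul_comm, mul_comm |f x - b|]
        gcongr
        exacts [min_le_left _ _, min_le_right _ _]

theorem lecam_two_point (hP : ∀ x, 0 ≤ P x) (hQ : ∀ x, 0 ≤ Q x)
    (hP1 : ∑ x, P x = 1) (hQ1 : ∑ x, Q x = 1) (hPQ : ∑ x, |P x - Q x| ≤ 1)
    (f : X → ℝ) (a b : ℝ) :
    |a - b| / 4 ≤ ∑ x, P x * |f x - a| ∨ |a - b| / 4 ≤ ∑ x, Q x * |f x - b| := by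
  have h := abs_sub_mul_sum_min_le hP hQ f a b
  rw [sum_min_eq hP1 hQ1] at h
  have hhalf : |a - b| / 2 ≤ |a - b| * (1 - (∑ x, |P x - Q x|) / 2) := by
    nlinarith [abs_nonneg (a - b)]
  by_contra! hlt
  linarith [hlt.1, hlt.2]

end LeCam

section Channel

variable {O : Type*} [Fintype O] {n : ℕ}

def bitCount (b : Fin n → Bool) : ℝ := ∑ i, if b i then 1 else 0

theorem bitCount_const_false : bitCount (fun _ : Fin n => false) = 0 := by
  simp [bitCount]

def risk (K : Bool → O → ℝ) (est : (Fin n → O) → ℝ) (b : Fin n → Bool) : ℝ :=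
  ∑ o : Fin n → O, (∏ i, K (b i) (o i)) * |est o - bitCount b|

variable {K : Bool → O → ℝ} (hK0 : ∀ b x, 0 ≤ K b x) (hK1 : ∀ b, ∑ x, K b x = 1)
include hK0 hK1

theorem sum_abs_channel_prod_sub_le (b : Fin n → Bool) :
    ∑ o : Fin n → O, |∏ i, K (b i) (o i) - ∏ i, K false (o i)| ≤
      bitCount b * ∑ x, |K true x - K false x| := by
  refine (sum_abs_prod_sub_prod_le (fun i => hK0 _) (fun _ => hK0 false) (fun i => hK1 _)
    (fun _ => hK1 false)).trans_eq ?_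
  rw [bitCount, sum_mul]
  refine sum_congr rfl fun i _ => ?_
  cases b i <;> simp

theorem channel_two_point (b b' : Fin n → Bool)
    (hdist : ∑ o : Fin n → O, |∏ i, K (b i) (o i) - ∏ i, K (b' i) (o i)| ≤ 1)
    (est : (Fin n → O) → ℝ) :
    |bitCount b - bitCount b'| / 4 ≤ risk K est b ∨
      |bitCount b - bitCount b'| / 4 ≤ risk K est b' := by
  have hnonneg (b : Fin n → Bool) (o : Fin n → O) : 0 ≤ ∏ i, K (b i) (o i) :=
    prod_nonneg fun i _ => hK0 _ _
  have hsum (b : Fin n → Bool) : ∑ o : Fin n → O, ∏ i, K (b i) (o i) = 1 :=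
    sum_prod_eq_one fun i => hK1 _
  exact lecam_two_point (hnonneg b) (hnonneg b') (hsum b) (hsum b') hdist est _ _

end Channel

theorem natFloor_one_div_mul_le_one {x : ℝ} (hx : 0 ≤ x) : ⌊1 / x⌋₊ * x ≤ 1 := by
  rcases hx.eq_or_lt with rfl | hx
  · simp
  · calc ⌊1 / x⌋₊ * x ≤ 1 / x * x := by gcongr; exact Nat.floor_le (by positivity)
      _ = 1 := by field_simp

theorem quarter_min_le_min_natFloor (n : ℕ) {δ : ℝ} (hδ0 : 0 ≤ δ) (hδ : δ ≤ 1 / 2) :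
    1 / 4 * min (n : ℝ) (1 / δ) ≤ (min n ⌊1 / (2 * δ)⌋₊ : ℕ) := by
  rcases hδ0.eq_or_lt with rfl | hδ0
  · simp
  have hfloor := Nat.div_two_lt_floor (a := 1 / (2 * δ))
    (by rw [le_div_iff₀ (by positivity)]; linarith)
  rw [Nat.cast_min, mul_min_of_nonneg _ _ (by norm_num)]
  refine min_le_min (by linarith [n.cast_nonneg (α := ℝ)]) ?_
  calc 1 / 4 * (1 / δ) = 1 / (2 * δ) / 2 := by ring
    _ ≤ _ := hfloor.le

/-- Le Cam-style minimax lower bound: there is a universal constant `c0 > 0` such that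
for any binary channel `K` whose two output distributions are at total variation
distance at most `δ` (with `δ ≤ 1/2`, the nontrivial regime), and any estimator of
`S = Σ b_i` from `n` independent channel outputs, some input bit-vector forces
expected error at least `c0 · min(n, 1/δ)`. -/
theorem stmt17 :
    ∃ c0 : ℝ, 0 < c0 ∧
      ∀ (n : ℕ) (O : Type) (_ : Fintype O) (K : Bool → O → ℝ) (δ : ℝ),
        (∀ b o, 0 ≤ K b o) → (∀ b, ∑ o, K b o = 1) →
        0 ≤ δ → δ ≤ 1 / 2 →
        ((1 / 2) * ∑ o, |K true o - K false o| ≤ δ) →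
        ∀ est : (Fin n → O) → ℝ,
          ∃ b : Fin n → Bool,
            c0 * min (n : ℝ) (1 / δ) ≤
              ∑ o : Fin n → O, (∏ i, K (b i) (o i)) *
                |est o - ∑ i, (if b i then (1 : ℝ) else 0)| := by
  refine ⟨1 / 16, by norm_num, ?_⟩
  intro n O _ K δ hK0 hK1 hδ0 hδ hTV est
  set k := ⌊1 / (2 * δ)⌋₊
  let b : Fin n → Bool := fun i => decide ((i : ℕ) < k)
  have hcount : bitCount b = (min n k : ℕ) := by
    simp [bitCount, b, sum_boole, Fin.card_filter_val_lt]
  have hdist : ∑ o : Fin n → O, |∏ i, K (b i) (o i) - ∏ i, K false (o i)| ≤ 1 :=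
    calc _ ≤ (min n k : ℕ) * ∑ x, |K true x - K false x| :=
          hcount ▸ sum_abs_channel_prod_sub_le hK0 hK1 b
      _ ≤ k * (2 * δ) := by gcongr; exacts [Nat.min_le_right _ _, by linarith]
      _ ≤ 1 := natFloor_one_div_mul_le_one (by positivity)
  have hbound :
      1 / 16 * min (n : ℝ) (1 / δ) ≤ |bitCount b - bitCount fun _ : Fin n => false| / 4 := by
    rw [bitCount_const_false, sub_zero, hcount, Nat.abs_cast]
    linarith [quarter_min_le_min_natFloor n hδ0 hδ]
  rcases channel_two_point hK0 hK1 b (fun _ => false) hdist est with h | h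
  exacts [⟨b, hbound.trans h⟩, ⟨_, hbound.trans h⟩]
end
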